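/- arXiv:2102.12601 — 2 statements merged into one kernel-verified Lean document; each statement's English description precedes it below -/
import Mathlib

section
/- If F(t,x) = exp(a(t)'x + β(t)) where a(t) solves da/dt = K'a(t) with a(T) = e₁ and β(t) solves dβ/dt = -(μ-λ)'a(t) - (1/2)Tr(ΣΩΣ a(t)a(t)') with β(T) = 0, then F satisfies the PDE ∂_t F + (μ-λ-Kx)'∇_x F + (1/2)Tr(ΣΩΣ ∇_{xx}F) = 0 on [0,T)×ℝ^N with terminal condition F(T,x) = exp(e₁'x). -/
open Matrix

/-!
`F = exp (a(t)ᵀx + β(t))` is exponential-affine in `x`, so `∇ₓF = F a` and `∇ₓₓF = F a aᵀ`.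
Dividing the PDE by `F` leaves `a'ᵀx + β' + (μ - λ - Kx)ᵀa + ½ Tr(ΣΩΣ a aᵀ)`, which vanishes because
`a' = Kᵀa` gives `a'ᵀx = (Kx)ᵀa`, and `β'` cancels the remaining terms.
-/

section ExpAffine

variable {ι : Type*} [Fintype ι]

theorem hasFDerivAt_exp_dotProduct_add (b : ι → ℝ) (c : ℝ) (x : ι → ℝ) :
    HasFDerivAt (fun y => Real.exp (b ⬝ᵥ y + c))
      (Real.exp (b ⬝ᵥ x + c) • LinearMap.toContinuousLinearMap (dotProductBilin ℝ ℝ b)) x := by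
  have hlin : HasFDerivAt (fun y => b ⬝ᵥ y + c)
      (LinearMap.toContinuousLinearMap (dotProductBilin ℝ ℝ b)) x :=
    (LinearMap.toContinuousLinearMap (dotProductBilin ℝ ℝ b)).hasFDerivAt.add_const c
  simpa using hlin.exp

theorem fderiv_exp_dotProduct_add_apply (b : ι → ℝ) (c : ℝ) (x v : ι → ℝ) :
    fderiv ℝ (fun y => Real.exp (b ⬝ᵥ y + c)) x v = Real.exp (b ⬝ᵥ x + c) * (b ⬝ᵥ v) := by
  rw [(hasFDerivAt_exp_dotProduct_add b c x).fderiv]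
  simp

theorem fderiv_fderiv_exp_dotProduct_add_apply (b : ι → ℝ) (c : ℝ) (x v w : ι → ℝ) :
    fderiv ℝ (fun y => fderiv ℝ (fun z => Real.exp (b ⬝ᵥ z + c)) y v) x w
      = Real.exp (b ⬝ᵥ x + c) * (b ⬝ᵥ w) * (b ⬝ᵥ v) := by
  simp_rw [fderiv_exp_dotProduct_add_apply]
  rw [fderiv_mul_const (hasFDerivAt_exp_dotProduct_add b c x).differentiableAt]
  simp only [FunLike.coe_smul, Pi.smul_apply, smul_eq_mul,
    fderiv_exp_dotProduct_add_apply]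
  ring

end ExpAffine

theorem HasDerivAt.dotProduct_const {𝕜 ι : Type*} [NontriviallyNormedField 𝕜] [Fintype ι]
    {a : 𝕜 → ι → 𝕜} {a' : ι → 𝕜} {t : 𝕜} (h : HasDerivAt a a' t) (x : ι → 𝕜) :
    HasDerivAt (fun s => a s ⬝ᵥ x) (a' ⬝ᵥ x) t :=
  HasDerivAt.fun_sum fun i _ => (hasDerivAt_pi.mp h i).mul_const (x i)

theorem stmt_2_general (N : ℕ) (K Sig Ω : Matrix (Fin N) (Fin N) ℝ)
    (μ lam : Fin N → ℝ) (T : ℝ)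
    (e₁ : Fin N → ℝ)
    (a : ℝ → Fin N → ℝ) (β : ℝ → ℝ)
    (haODE : ∀ t : ℝ, HasDerivAt a (Kᵀ.mulVec (a t)) t)
    (haT : a T = e₁)
    (hβODE : ∀ t : ℝ, HasDerivAt β
      (-((μ - lam) ⬝ᵥ a t) - (1 / 2) * (Sig * Ω * Sig * vecMulVec (a t) (a t)).trace) t)
    (hβT : β T = 0)
    (F : ℝ → (Fin N → ℝ) → ℝ)
    (hF : ∀ t x, F t x = Real.exp (a t ⬝ᵥ x + β t)) :
    (∀ t ∈ Set.Ico (0 : ℝ) T, ∀ x : Fin N → ℝ,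
      deriv (fun s => F s x) t
        + (μ - lam - K.mulVec x) ⬝ᵥ (fun i => fderiv ℝ (F t) x (Pi.single i 1))
        + (1 / 2) * (Sig * Ω * Sig *
            Matrix.of (fun i j =>
              fderiv ℝ (fun y => fderiv ℝ (F t) y (Pi.single j 1)) x (Pi.single i 1))).trace
        = 0)
    ∧ ∀ x : Fin N → ℝ, F T x = Real.exp (e₁ ⬝ᵥ x) := by
  refine ⟨fun t _ x => ?_, fun x => by rw [hF, haT, hβT, add_zero]⟩
  obtain rfl : F = fun t x => Real.exp (a t ⬝ᵥ x + β t) := funext₂ hF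
  set E := Real.exp (a t ⬝ᵥ x + β t)
  have htime : deriv (fun s => Real.exp (a s ⬝ᵥ x + β s)) t = E * (Kᵀ *ᵥ a t ⬝ᵥ x
      + (-((μ - lam) ⬝ᵥ a t) - (1 / 2) * (Sig * Ω * Sig * vecMulVec (a t) (a t)).trace)) :=
    (((haODE t).dotProduct_const x).fun_add (hβODE t)).exp.deriv
  have hgrad : (fun i => fderiv ℝ (fun z => Real.exp (a t ⬝ᵥ z + β t)) x (Pi.single i 1))
      = E • a t := by
    ext i
    simp [fderiv_exp_dotProduct_add_apply, E]
  have hhess : Matrix.of (fun i j => fderiv ℝ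
      (fun y => fderiv ℝ (fun z => Real.exp (a t ⬝ᵥ z + β t)) y (Pi.single j 1)) x
        (Pi.single i 1)) = E • vecMulVec (a t) (a t) := by
    ext i j
    simp [fderiv_fderiv_exp_dotProduct_add_apply, vecMulVec_apply, E, mul_assoc]
  have hdrift : Kᵀ *ᵥ a t ⬝ᵥ x = K *ᵥ x ⬝ᵥ a t := by
    rw [mulVec_transpose, ← dotProduct_mulVec, dotProduct_comm]
  rw [htime, hgrad, hhess, Matrix.mul_smul, hdrift]
  simp only [trace_smul, smul_eq_mul, dotProduct_smul, sub_dotProduct]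
  ring

/-- If `F(t,x) = exp(a(t)'x + β(t))` where `a` solves `da/dt = Kᵀa(t)`, `a(T) = e₁`, and
`β` solves `dβ/dt = -(μ-λ)'a(t) - (1/2)Tr(ΣΩΣ a(t)a(t)')`, `β(T) = 0`, then `F` satisfies
`∂ₜF + (μ-λ-Kx)'∇ₓF + (1/2)Tr(ΣΩΣ ∇ₓₓF) = 0` on `[0,T) × ℝᴺ` with `F(T,x) = exp(e₁'x)`. -/
theorem stmt_2 (N : ℕ) (hN : 0 < N) (K Sig Ω : Matrix (Fin N) (Fin N) ℝ)
    (μ lam : Fin N → ℝ) (T : ℝ) (hT : 0 < T)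
    (e₁ : Fin N → ℝ) (he₁ : e₁ = Pi.single ⟨0, hN⟩ 1)
    (a : ℝ → Fin N → ℝ) (β : ℝ → ℝ)
    (haODE : ∀ t : ℝ, HasDerivAt a (Kᵀ.mulVec (a t)) t)
    (haT : a T = e₁)
    (hβODE : ∀ t : ℝ, HasDerivAt β
      (-((μ - lam) ⬝ᵥ a t) - (1 / 2) * (Sig * Ω * Sig * vecMulVec (a t) (a t)).trace) t)
    (hβT : β T = 0)
    (F : ℝ → (Fin N → ℝ) → ℝ)
    (hF : ∀ t x, F t x = Real.exp (a t ⬝ᵥ x + β t)) :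
    (∀ t ∈ Set.Ico (0 : ℝ) T, ∀ x : Fin N → ℝ,
      deriv (fun s => F s x) t
        + (μ - lam - K.mulVec x) ⬝ᵥ (fun i => fderiv ℝ (F t) x (Pi.single i 1))
        + (1 / 2) * (Sig * Ω * Sig *
            Matrix.of (fun i j =>
              fderiv ℝ (fun y => fderiv ℝ (F t) y (Pi.single j 1)) x (Pi.single i 1))).trace
        = 0)
    ∧ ∀ x : Fin N → ℝ, F T x = Real.exp (e₁ ⬝ᵥ x) :=
  stmt_2_general N K Sig Ω μ lam T e₁ a β haODE haT hβODE hβT F hF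
end

section
/- The function u(t,w) = -exp(-γw - (1/2)∫_t^{T̃} Λ²(s) ds) solves the HJB equation ∂_t u + sup_{π∈ℝ^M} [π'μ_F(t) ∂_w u + (1/2) π'Σ_F(t)Σ_F(t)'π ∂_{ww}u] = 0 on [0,T̃)×ℝ with terminal condition u(T̃,w) = -e^{-γw}, where Λ²(t) = μ_F(t)'(Σ_F(t)Σ_F(t)')^{-1}μ_F(t). -/
/-!
Writing `e = exp (-γ w - ½ ∫ₜ^T̃ Λ²)`, one has `∂_w u = γ e`, `∂_ww u = -γ² e` and
`∂_t u = -½ Λ²(t) e`. Since `Σ_F` has full row rank, `Σ_F Σ_F'` is positive definite, so the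
bracket is a strictly concave quadratic in `π`; completing the square at
`π* = γ⁻¹ (Σ_F Σ_F')⁻¹ μ_F` shows its supremum is `½ Λ²(t) e`, which cancels `∂_t u`.
-/

open Matrix

namespace Matrix

theorem mulVec_injective_of_rank_eq {m n K : Type*} [Fintype n] [Field K] (A : Matrix m n K)
    (h : A.rank = Fintype.card n) : Function.Injective A.mulVec := by
  have hker := LinearMap.finrank_range_add_finrank_ker A.mulVecLin
  rw [← rank, h, Module.finrank_fintype_fun_eq_card, Nat.add_eq_left,
    Submodule.finrank_eq_zero, LinearMap.ker_eq_bot] at hker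
  exact hker

theorem posDef_mul_transpose_of_rank_eq {m n : Type*} [Fintype m] [Fintype n]
    (S : Matrix m n ℝ) (h : S.rank = Fintype.card m) : (S * Sᵀ).PosDef := by
  have hinj := Sᵀ.mulVec_injective_of_rank_eq (by rwa [rank_transpose])
  rw [funext (mulVec_transpose S)] at hinj
  simpa using PosDef.mul_conjTranspose_self S hinj

theorem _root_.Continuous.matrix_nonsing_inv {X n K : Type*} [TopologicalSpace X] [Fintype n]
    [DecidableEq n] [Field K] [TopologicalSpace K] [IsTopologicalDivisionRing K]
    {A : X → Matrix n n K} (hA : Continuous A) (h : ∀ x, (A x).det ≠ 0) :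
    Continuous fun x => (A x)⁻¹ := by
  simp only [inv_def, Ring.inverse_eq_inv']
  exact (hA.matrix_det.inv₀ h).smul hA.matrix_adjugate

section Quadratic

variable {n : Type*} [Fintype n] {A : Matrix n n ℝ}

theorem dotProduct_mulVec_comm_of_isHermitian (hA : A.IsHermitian) (x y : n → ℝ) :
    x ⬝ᵥ A *ᵥ y = y ⬝ᵥ A *ᵥ x := by
  rw [dotProduct_mulVec, ← mulVec_transpose, ← conjTranspose_eq_transpose_of_trivial, hA,
    dotProduct_comm]

theorem PosDef.iSup_dotProduct_mul_add_quadForm_mul [DecidableEq n] (hA : A.PosDef)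
    (μ : n → ℝ) (b : ℝ) {d : ℝ} (hd : d < 0) :
    ⨆ π : n → ℝ, (π ⬝ᵥ μ) * b + 1 / 2 * (π ⬝ᵥ A *ᵥ π) * d
      = -(b ^ 2 / (2 * d)) * (μ ⬝ᵥ A⁻¹ *ᵥ μ) := by
  set f := fun π : n → ℝ => (π ⬝ᵥ μ) * b + 1 / 2 * (π ⬝ᵥ A *ᵥ π) * d
  set πopt := -(b / d) • A⁻¹ *ᵥ μ
  have hAπopt : A *ᵥ πopt = -(b / d) • μ := by
    rw [mulVec_smul, mulVec_mulVec, mul_nonsing_inv _ ((isUnit_iff_isUnit_det A).1 hA.isUnit),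
      one_mulVec]
  have hπoptμ : πopt ⬝ᵥ μ = -(b / d) * (μ ⬝ᵥ A⁻¹ *ᵥ μ) := by
    rw [smul_dotProduct, smul_eq_mul, dotProduct_comm]
  have hsquare : ∀ π, f π = -(b ^ 2 / (2 * d)) * (μ ⬝ᵥ A⁻¹ *ᵥ μ)
      + d / 2 * ((π - πopt) ⬝ᵥ A *ᵥ (π - πopt)) := by
    intro π
    have hcross := dotProduct_mulVec_comm_of_isHermitian hA.1 πopt π
    simp only [f, mulVec_sub, dotProduct_sub, sub_dotProduct, hcross, hAπopt, dotProduct_smul,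
      smul_eq_mul, hπoptμ]
    field_simp [hd.ne]
    ring
  have hgreatest : IsGreatest (Set.range f) (-(b ^ 2 / (2 * d)) * (μ ⬝ᵥ A⁻¹ *ᵥ μ)) := by
    refine ⟨⟨πopt, by simp [hsquare]⟩, ?_⟩
    rintro _ ⟨π, rfl⟩
    have := hA.posSemidef.dotProduct_mulVec_nonneg (π - πopt)
    rw [star_trivial] at this
    rw [hsquare]
    nlinarith
  exact hgreatest.csSup_eq

end Quadratic

end Matrix

section

open Real

theorem hasDerivAt_exp_neg_mul_sub (a c x : ℝ) :
    HasDerivAt (fun w => exp (-a * w - c)) (-a * exp (-a * x - c)) x := by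
  simpa [mul_comm] using (((hasDerivAt_id x).const_mul (-a)).sub_const c).exp

theorem deriv_neg_exp_neg_mul_sub (a c : ℝ) :
    deriv (fun w => -exp (-a * w - c)) = fun w => a * exp (-a * w - c) :=
  funext fun x => by simpa using (hasDerivAt_exp_neg_mul_sub a c x).neg.deriv

theorem deriv_deriv_neg_exp_neg_mul_sub (a c x : ℝ) :
    deriv (deriv fun w => -exp (-a * w - c)) x = -a ^ 2 * exp (-a * x - c) := by
  rw [deriv_neg_exp_neg_mul_sub, ((hasDerivAt_exp_neg_mul_sub a c x).const_mul a).deriv]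
  ring

theorem deriv_neg_exp_sub_half_integral {f : ℝ → ℝ} (hf : Continuous f) (b c t : ℝ) :
    deriv (fun s => -exp (c - 1 / 2 * ∫ x in s..b, f x)) t
      = -(1 / 2 * f t * exp (c - 1 / 2 * ∫ x in t..b, f x)) := by
  have hint : HasDerivAt (fun s => ∫ x in s..b, f x) (-f t) t :=
    intervalIntegral.integral_hasDerivAt_left (hf.intervalIntegrable t b)
      hf.stronglyMeasurable.stronglyMeasurableAtFilter hf.continuousAt
  rw [((hint.const_mul (1 / 2)).const_sub c).exp.fun_neg.deriv]
  ring

end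

theorem stmt_9_general (M N : ℕ) (γ T' : ℝ) (hγ : 0 < γ)
    (μF : ℝ → Fin M → ℝ) (SigF : ℝ → Matrix (Fin M) (Fin N) ℝ)
    (hμcont : Continuous μF) (hSigcont : Continuous SigF)
    (hrank : ∀ t : ℝ, (SigF t).rank = M)
    (Λsq : ℝ → ℝ)
    (hΛ : ∀ t : ℝ, Λsq t = μF t ⬝ᵥ ((SigF t * (SigF t)ᵀ)⁻¹).mulVec (μF t))
    (u : ℝ → ℝ → ℝ)
    (hu : ∀ t w : ℝ, u t w = -Real.exp (-γ * w - (1 / 2) * ∫ s in t..T', Λsq s)) :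
    (∀ t ∈ Set.Ico (0 : ℝ) T', ∀ w : ℝ,
      deriv (fun s => u s w) t
        + (⨆ π : Fin M → ℝ,
            (π ⬝ᵥ μF t) * deriv (fun v => u t v) w
              + (1 / 2) * (π ⬝ᵥ (SigF t * (SigF t)ᵀ).mulVec π)
                * deriv (deriv (fun v => u t v)) w)
        = 0)
    ∧ ∀ w : ℝ, u T' w = -Real.exp (-γ * w) := by
  obtain rfl := funext₂ hu
  have hpd : ∀ t, (SigF t * (SigF t)ᵀ).PosDef := fun t =>
    (SigF t).posDef_mul_transpose_of_rank_eq (by rw [Fintype.card_fin, hrank])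
  have hΛcont : Continuous Λsq := by
    rw [funext hΛ]
    exact hμcont.dotProduct ((Continuous.matrix_nonsing_inv (hSigcont.matrix_mul
      hSigcont.matrix_transpose) fun t => (hpd t).det_pos.ne').matrix_mulVec hμcont)
  refine ⟨fun t _ w => ?_, fun w => by simp⟩
  have hd : -γ ^ 2 * Real.exp (-γ * w - 1 / 2 * ∫ s in t..T', Λsq s) < 0 :=
    mul_neg_of_neg_of_pos (neg_neg_of_pos (pow_pos hγ 2)) (Real.exp_pos _)
  rw [deriv_neg_exp_sub_half_integral hΛcont, deriv_deriv_neg_exp_neg_mul_sub,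
    deriv_neg_exp_neg_mul_sub, (hpd t).iSup_dotProduct_mul_add_quadForm_mul _ _ hd, ← hΛ t]
  field_simp
  ring

/-- `u(t,w) = -exp(-γw - (1/2)∫_t^{T̃} Λ²(s)ds)` solves the HJB equation
`∂ₜu + sup_{π∈ℝᴹ} [π'μ_F(t) ∂_w u + (1/2) π'Σ_F(t)Σ_F(t)'π ∂_{ww}u] = 0`
on `[0,T̃)×ℝ` with terminal condition `u(T̃,w) = -e^{-γw}`, where
`Λ²(t) = μ_F(t)'(Σ_F(t)Σ_F(t)')⁻¹μ_F(t)`. -/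
theorem stmt_9 (M N : ℕ) (hMN : M ≤ N) (γ T' : ℝ) (hγ : 0 < γ) (hT' : 0 < T')
    (μF : ℝ → Fin M → ℝ) (SigF : ℝ → Matrix (Fin M) (Fin N) ℝ)
    (hμcont : Continuous μF) (hSigcont : Continuous SigF)
    (hrank : ∀ t : ℝ, (SigF t).rank = M)
    (Λsq : ℝ → ℝ)
    (hΛ : ∀ t : ℝ, Λsq t = μF t ⬝ᵥ ((SigF t * (SigF t)ᵀ)⁻¹).mulVec (μF t))
    (u : ℝ → ℝ → ℝ)
    (hu : ∀ t w : ℝ, u t w = -Real.exp (-γ * w - (1 / 2) * ∫ s in t..T', Λsq s)) :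
    (∀ t ∈ Set.Ico (0 : ℝ) T', ∀ w : ℝ,
      deriv (fun s => u s w) t
        + (⨆ π : Fin M → ℝ,
            (π ⬝ᵥ μF t) * deriv (fun v => u t v) w
              + (1 / 2) * (π ⬝ᵥ (SigF t * (SigF t)ᵀ).mulVec π)
                * deriv (deriv (fun v => u t v)) w)
        = 0)
    ∧ ∀ w : ℝ, u T' w = -Real.exp (-γ * w) :=
  stmt_9_general M N γ T' hγ μF SigF hμcont hSigcont hrank Λsq hΛ u hu
end
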